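/- arXiv:1305.4826 — 3 statements merged into one kernel-verified Lean document; each statement's English description precedes it below -/
import Mathlib

section
/- Let a, b be real numbers. The subgroup of (R, +) generated by a and b is closed in R if and only if a and b are rationally dependent (i.e., there exist rationals, not both zero, giving a rational linear relation between a and b, including the degenerate cases a = 0 or b = 0). -/
/-!
The subgroup generated by `a` and `b` is countable, and a subgroup of `ℝ` is either dense or
cyclic; a dense closed subgroup would be all of `ℝ`, so closedness means lying in some `ℤ c`.
Conversely every subgroup of `ℤ c` is discrete, hence closed. Finally, `a` and `b` lie in a
common `ℤ c` exactly when they are rationally dependent: if `b = (m / n) a` take `c = a / n`.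
-/

open AddSubgroup

section Archimedean

variable {G : Type*} [AddCommGroup G] [LinearOrder G] [IsOrderedAddMonoid G] [TopologicalSpace G]
  [OrderTopology G]

theorem AddSubgroup.isClosed_of_le_zmultiples {H : AddSubgroup G} {c : G}
    (hle : H ≤ zmultiples c) : IsClosed (H : Set G) :=
  have : DiscreteTopology H :=
    .of_subset (inferInstanceAs (DiscreteTopology (zmultiples c))) (SetLike.coe_subset_coe.2 hle)
  H.isClosed_of_discrete

variable [Archimedean G] [Uncountable G]

theorem AddSubgroup.isClosed_iff_exists_le_zmultiples {H : AddSubgroup G}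
    (hH : (H : Set G).Countable) : IsClosed (H : Set G) ↔ ∃ c, H ≤ zmultiples c := by
  refine ⟨fun hclosed => ?_, fun ⟨c, hle⟩ => isClosed_of_le_zmultiples hle⟩
  rcases H.dense_or_cyclic with hdense | ⟨c, rfl⟩
  · have : (H : Set G) = Set.univ := by rw [← hclosed.closure_eq, hdense.closure_eq]
    exact absurd (this ▸ hH) Set.not_countable_univ
  · exact ⟨c, (zmultiples_eq_closure c).ge⟩

end Archimedean

theorem AddSubgroup.countable_closure_pair {G : Type*} [AddCommGroup G] (a b : G) :
    (closure {a, b} : Set G).Countable :=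
  (Set.countable_range fun p : ℤ × ℤ => p.1 • a + p.2 • b).mono fun _ hx => by
    obtain ⟨m, n, hmn⟩ := mem_closure_pair.1 hx
    exact ⟨(m, n), hmn⟩

theorem exists_mem_zmultiples_iff_exists_rat_relation {K : Type*} [Field K] [CharZero K]
    (a b : K) :
    (∃ c, a ∈ zmultiples c ∧ b ∈ zmultiples c) ↔
      ∃ q r : ℚ, (q ≠ 0 ∨ r ≠ 0) ∧ (q : K) * a + (r : K) * b = 0 := by
  constructor
  · rintro ⟨c, ⟨m, rfl⟩, ⟨n, rfl⟩⟩
    rcases eq_or_ne m 0 with rfl | hm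
    · exact ⟨1, 0, .inl one_ne_zero, by simp⟩
    · refine ⟨n, -m, .inr (by exact_mod_cast neg_ne_zero.2 hm), ?_⟩
      simp only [zsmul_eq_mul]
      push_cast
      ring
  · rintro ⟨q, r, hqr, hrel⟩
    rcases eq_or_ne r 0 with rfl | hr
    · have ha : a = 0 := by simpa [hqr.resolve_right (not_not.2 rfl)] using hrel
      exact ⟨b, ⟨0, by simp [ha]⟩, ⟨1, one_zsmul b⟩⟩
    set t : ℚ := -q / r
    have hb : b = t * a := by
      have : (r : K) ≠ 0 := by exact_mod_cast hr
      simp only [t]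
      push_cast
      field_simp
      linear_combination hrel
    have hden : (t.den : K) ≠ 0 := Nat.cast_ne_zero.2 t.den_nz
    refine ⟨a / t.den, ⟨t.den, ?_⟩, ⟨t.num, ?_⟩⟩
    · simp only [zsmul_eq_mul, Int.cast_natCast, mul_div_cancel₀ a hden]
    · simp only [zsmul_eq_mul, hb, Rat.cast_def]
      ring

/-- The subgroup of `(ℝ, +)` generated by `a` and `b` is closed iff `a` and `b` are
rationally dependent (there exist rationals, not both zero, with `q·a + r·b = 0`). -/
theorem isClosed_addSubgroup_pair_iff_rationally_dependent (a b : ℝ) :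
    IsClosed ((AddSubgroup.closure {a, b} : AddSubgroup ℝ) : Set ℝ) ↔
      ∃ q r : ℚ, (q ≠ 0 ∨ r ≠ 0) ∧ (q : ℝ) * a + (r : ℝ) * b = 0 := by
  rw [isClosed_iff_exists_le_zmultiples (countable_closure_pair a b),
    ← exists_mem_zmultiples_iff_exists_rat_relation]
  simp only [closure_le, Set.insert_subset_iff, Set.singleton_subset_iff, SetLike.mem_coe]
end

section
/- Let G be an abelian topological group and U ⊆ G a quasi-convex neighbourhood of 0. For n ≥ 1 put (1/n)U = {x ∈ G : x, 2x, ..., nx ∈ U}. Then (1/n)U equals the intersection over χ ∈ U^▷ of χ^{-1}(T_n), where T_n = [-1/(4n), 1/(4n)] + Z. -/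
/-!
Quasi-convexity says that `U` is cut out by its polar: `y ∈ U` iff `χ y ∈ T₊` for every
`χ ∈ U^▷`. Applied to `y = k • x` this turns `x ∈ (1/n)U` into `k • χ x ∈ T₊` for all
`χ ∈ U^▷` and `1 ≤ k ≤ n`, so the theorem reduces to the same statement on the circle,
`T_n = (1/n)T₊`. There, if `t ∈ [-1/4, 1/4]` represents `χ x`, induction on `k` keeps a
representative of `k • χ x` within `3/4` of `0`, where the only representative lying in
`T₊` is `k * t` itself; hence `|n * t| ≤ 1/4`.
-/

/-- `T_n = [-1/(4n), 1/(4n)] + ℤ` inside the circle `𝕋 = ℝ/ℤ`. -/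
def Tm (n : ℕ) : Set (AddCircle (1 : ℝ)) :=
  {x | ∃ r : ℝ, |r| ≤ 1 / (4 * n) ∧ (r : AddCircle (1 : ℝ)) = x}

/-- Quasi-convexity of a subset of an abelian topological group (`T₊ = T_1`). -/
def QuasiConvex {G : Type*} [AddCommGroup G] [TopologicalSpace G] (A : Set G) : Prop :=
  ∀ x ∉ A, ∃ χ : ContinuousAddMonoidHom G (AddCircle (1 : ℝ)),
    (∀ a ∈ A, χ a ∈ Tm 1) ∧ χ x ∉ Tm 1

open AddCircle

lemma abs_le_of_coe_mem_Tm_one {s : ℝ} (hs : |s| < 3 / 4)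
    (h : (s : AddCircle (1 : ℝ)) ∈ Tm 1) : |s| ≤ 1 / 4 := by
  obtain ⟨r, hr₁, hrs⟩ := h
  have hr : |r| ≤ 1 / 4 := by simpa using hr₁
  obtain ⟨m, hm₁⟩ : ∃ m : ℤ, m • (1 : ℝ) = s - r :=
    (coe_eq_zero_iff 1).1 (by rw [coe_sub, hrs, sub_self])
  have hm : (m : ℝ) = s - r := by simpa using hm₁
  have hm0 : m = 0 := by
    have : |(m : ℝ)| < 1 :=
      calc |(m : ℝ)| = |s - r| := by rw [hm]
        _ ≤ |s| + |r| := abs_sub _ _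
        _ < 1 := by linarith
    exact Int.abs_lt_one_iff.1 (by exact_mod_cast this)
  rw [hm0, Int.cast_zero, eq_comm, sub_eq_zero] at hm
  rwa [hm]

lemma abs_nat_mul_le_of_forall_coe_mem_Tm_one {t : ℝ} {n : ℕ} (ht : |t| ≤ 1 / 4)
    (h : ∀ k : ℕ, 1 ≤ k → k ≤ n → ((k * t : ℝ) : AddCircle (1 : ℝ)) ∈ Tm 1) :
    |n * t| ≤ 1 / 4 := by
  induction n with
  | zero => simp
  | succ n ih =>
    have hn : |n * t| ≤ 1 / 4 := ih fun k hk hkn => h k hk (hkn.trans n.le_succ)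
    refine abs_le_of_coe_mem_Tm_one ?_ (h (n + 1) n.succ_pos le_rfl)
    calc |((n + 1 : ℕ) : ℝ) * t| = |n * t + t| := by push_cast; ring_nf
      _ ≤ |n * t| + |t| := abs_add_le _ _
      _ < 3 / 4 := by linarith

lemma mem_Tm_iff_forall_nsmul_mem_Tm_one {n : ℕ} (hn : 1 ≤ n) {x : AddCircle (1 : ℝ)} :
    x ∈ Tm n ↔ ∀ k : ℕ, 1 ≤ k → k ≤ n → k • x ∈ Tm 1 := by
  have hn' : (0 : ℝ) < n := by exact_mod_cast hn
  constructor
  · rintro ⟨r, hr, rfl⟩ k - hkn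
    refine ⟨k * r, ?_, by rw [← nsmul_eq_mul, coe_nsmul]⟩
    have hkn : (k : ℝ) ≤ n := by exact_mod_cast hkn
    calc |k * r| = k * |r| := by rw [abs_mul, Nat.abs_cast]
      _ ≤ n * (1 / (4 * n)) := by gcongr
      _ = 1 / (4 * (1 : ℕ)) := by field_simp; norm_num
  · intro h
    obtain ⟨t, ht, htx⟩ := h 1 le_rfl hn
    rw [one_nsmul] at htx
    subst htx
    have hnt : |n * t| ≤ 1 / 4 :=
      abs_nat_mul_le_of_forall_coe_mem_Tm_one (by simpa using ht) fun k hk hkn => by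
        rw [← nsmul_eq_mul, coe_nsmul]
        exact h k hk hkn
    refine ⟨t, ?_, rfl⟩
    rw [abs_mul, Nat.abs_cast] at hnt
    rw [le_div_iff₀ (by positivity)]
    linarith

lemma QuasiConvex.mem_iff {G : Type*} [AddCommGroup G] [TopologicalSpace G] {U : Set G}
    (hU : QuasiConvex U) {x : G} :
    x ∈ U ↔ ∀ χ : ContinuousAddMonoidHom G (AddCircle (1 : ℝ)),
      (∀ a ∈ U, χ a ∈ Tm 1) → χ x ∈ Tm 1 := by
  refine ⟨fun hx χ hχ => hχ x hx, fun h => ?_⟩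
  by_contra hx
  obtain ⟨χ, hχ, hχx⟩ := hU x hx
  exact hχx (h χ hχ)

theorem oneOverN_eq_iInter_preimage_general {G : Type*} [AddCommGroup G] [TopologicalSpace G]
    (U : Set G) (hU : QuasiConvex U)
    (n : ℕ) (hn : 1 ≤ n) :
    {x : G | ∀ k : ℕ, 1 ≤ k → k ≤ n → k • x ∈ U} =
      ⋂ χ ∈ {χ : ContinuousAddMonoidHom G (AddCircle (1 : ℝ)) | ∀ a ∈ U, χ a ∈ Tm 1},
        χ ⁻¹' (Tm n) := by
  ext x
  simp only [Set.mem_ofPred_eq, Set.mem_iInter, Set.mem_preimage,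
    mem_Tm_iff_forall_nsmul_mem_Tm_one hn, ← map_nsmul]
  exact ⟨fun h χ hχ k hk hkn => hU.mem_iff.1 (h k hk hkn) χ hχ,
    fun h k hk hkn => hU.mem_iff.2 fun χ hχ => h χ hχ k hk hkn⟩

/-- `(1/n)U = {x : x, 2x, …, nx ∈ U}` equals `⋂_{χ ∈ U^▷} χ⁻¹(T_n)` for a quasi-convex
neighbourhood `U` of `0`. -/
theorem oneOverN_eq_iInter_preimage {G : Type*} [AddCommGroup G] [TopologicalSpace G]
    [IsTopologicalAddGroup G] (U : Set G) (hU : QuasiConvex U) (hU0 : U ∈ nhds (0 : G))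
    (n : ℕ) (hn : 1 ≤ n) :
    {x : G | ∀ k : ℕ, 1 ≤ k → k ≤ n → k • x ∈ U} =
      ⋂ χ ∈ {χ : ContinuousAddMonoidHom G (AddCircle (1 : ℝ)) | ∀ a ∈ U, χ a ∈ Tm 1},
        χ ⁻¹' (Tm n) :=
  oneOverN_eq_iInter_preimage_general U hU n hn
end

section
/- Let (b_n)_{n≥0} be a sequence of natural numbers with b_0 = 1, b_n ≠ b_{n+1} and b_n | b_{n+1} for all n. Then for each integer l there exist N and integers k_0, ..., k_N with l = Σ_{i=0}^N k_i b_i, |k_n| ≤ b_{n+1}/(2 b_n) for all 0 ≤ n ≤ N, and |Σ_{i=0}^n k_i b_i| ≤ b_{n+1}/2 for all 0 ≤ n ≤ N. -/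
/-!
Take as `n`-th partial sum `S n` the balanced residue of `l` modulo `b (n + 1)`, so that
`|S n| ≤ b (n + 1) / 2`, and `S (-1) = 0` as the residue modulo `b 0 = 1`. As `b n ∣ b (n + 1)`,
`S n - S (n - 1)` is a multiple `k n * b n`; it is smaller than `(b (n + 1) + b n) / 2` in
absolute value and `b (n + 1)` is a multiple of `b n` as well, so `|k n| * b n ≤ b (n + 1) / 2`.
Finally `b n ≥ 2 ^ n`, so `S N = l` as soon as `2 ^ (N + 1) > 2 |l|`.
-/

open Finset

theorem Int.le_of_lt_add_of_dvd {a b n : ℤ} (h : a < b + n) (ha : n ∣ a) (hb : n ∣ b) : a ≤ b := by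
  obtain ⟨c, hc⟩ := dvd_sub hb ha
  have hpos : 0 < n * (c + 1) := by linarith
  rcases pos_and_pos_or_neg_and_neg_of_mul_pos hpos with ⟨hn, hc1⟩ | ⟨hn, hc1⟩ <;> nlinarith

theorem Int.two_mul_abs_bmod_le (x : ℤ) {m : ℕ} (hm : 0 < m) : 2 * |x.bmod m| ≤ m := by
  have := Int.le_bmod (x := x) hm
  have := Int.bmod_lt (x := x) hm
  rcases abs_cases (x.bmod m) with ⟨h, -⟩ | ⟨h, -⟩ <;> omega

theorem Int.dvd_bmod_sub_bmod (x : ℤ) {d m : ℕ} (hdm : d ∣ m) : (d : ℤ) ∣ x.bmod m - x.bmod d := by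
  rw [← Int.bmod_bmod_of_dvd hdm]
  exact Int.dvd_self_sub_bmod

theorem Int.two_mul_abs_bmod_sub_bmod_le (x : ℤ) {d m : ℕ} (hm : 0 < m) (hdm : d ∣ m) :
    2 * |x.bmod m - x.bmod d| ≤ m := by
  have hd : 0 < d := Nat.pos_of_dvd_of_pos hdm hm
  have hcoarse : 2 * |x.bmod m - x.bmod d| < m + d := by
    have := Int.le_bmod (x := x) hm
    have := Int.bmod_le (x := x) hm
    have := Int.le_bmod (x := x) hd
    have := Int.bmod_le (x := x) hd
    rcases abs_cases (x.bmod m - x.bmod d) with ⟨h, -⟩ | ⟨h, -⟩ <;> omega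
  -- both sides are multiples of `d`, so the strict bound `< m + d` improves to `≤ m`
  refine Int.le_of_lt_add_of_dvd hcoarse ?_ (Int.natCast_dvd_natCast.mpr hdm)
  exact ((dvd_abs _ _).mpr (Int.dvd_bmod_sub_bmod x hdm)).mul_left 2

theorem Nat.two_mul_le_of_dvd_of_ne {d m : ℕ} (hm : m ≠ 0) (hdm : d ∣ m) (hne : d ≠ m) :
    2 * d ≤ m := by
  obtain ⟨c, rfl⟩ := hdm
  have hc0 : c ≠ 0 := by rintro rfl; simp at hm
  have hc1 : c ≠ 1 := by rintro rfl; simp at hne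
  calc 2 * d ≤ c * d := Nat.mul_le_mul_right d (by omega)
    _ = d * c := Nat.mul_comm c d

theorem pos_of_dvd_succ_of_ne_succ {b : ℕ → ℕ} (hne : ∀ n, b n ≠ b (n + 1))
    (hdvd : ∀ n, b n ∣ b (n + 1)) (n : ℕ) : 0 < b n := by
  refine Nat.pos_of_ne_zero fun h => hne n ?_
  rw [h, eq_comm, ← zero_dvd_iff, ← h]
  exact hdvd n

theorem two_pow_mul_le_of_dvd_succ_of_ne_succ {b : ℕ → ℕ} (hne : ∀ n, b n ≠ b (n + 1))
    (hdvd : ∀ n, b n ∣ b (n + 1)) (n : ℕ) : 2 ^ n * b 0 ≤ b n := by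
  induction n with
  | zero => simp
  | succ n ih =>
    have := Nat.two_mul_le_of_dvd_of_ne (pos_of_dvd_succ_of_ne_succ hne hdvd (n + 1)).ne'
      (hdvd n) (hne n)
    rw [pow_succ]
    linarith

def bmodDigit (b : ℕ → ℕ) (l : ℤ) (n : ℕ) : ℤ := (l.bmod (b (n + 1)) - l.bmod (b n)) / b n

theorem bmodDigit_mul {b : ℕ → ℕ} (l : ℤ) {n : ℕ} (hdvd : b n ∣ b (n + 1)) :
    bmodDigit b l n * b n = l.bmod (b (n + 1)) - l.bmod (b n) :=
  Int.ediv_mul_cancel (Int.dvd_bmod_sub_bmod l hdvd)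

theorem sum_bmodDigit_mul {b : ℕ → ℕ} (l : ℤ) (hb0 : b 0 = 1) (hdvd : ∀ n, b n ∣ b (n + 1))
    (n : ℕ) : ∑ i ∈ range n, bmodDigit b l i * b i = l.bmod (b n) := by
  simp_rw [bmodDigit_mul l (hdvd _)]
  rw [sum_range_sub (fun i => l.bmod (b i)), hb0, Int.bmod_one, sub_zero]

theorem two_mul_abs_bmodDigit_mul_le {b : ℕ → ℕ} (l : ℤ) {n : ℕ} (hpos : 0 < b (n + 1))
    (hdvd : b n ∣ b (n + 1)) : 2 * |bmodDigit b l n| * b n ≤ b (n + 1) := by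
  have h := Int.two_mul_abs_bmod_sub_bmod_le l hpos hdvd
  rwa [← bmodDigit_mul l hdvd, abs_mul, Nat.abs_cast, ← mul_assoc] at h

/-- Development of an integer as a sum pivoted by a sequence `(b_n)` with `b_0 = 1`,
`b_n ≠ b_{n+1}` and `b_n ∣ b_{n+1}`: every `l ∈ ℤ` can be written `l = Σ_{i=0}^N k_i b_i`
with `|k_n| ≤ b_{n+1}/(2 b_n)` and `|Σ_{i=0}^n k_i b_i| ≤ b_{n+1}/2` for all `n ≤ N`. -/
theorem integer_development (b : ℕ → ℕ) (hb0 : b 0 = 1)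
    (hne : ∀ n, b n ≠ b (n + 1)) (hdvd : ∀ n, b n ∣ b (n + 1)) (l : ℤ) :
    ∃ (N : ℕ) (k : ℕ → ℤ),
      l = ∑ i ∈ Finset.range (N + 1), k i * (b i : ℤ) ∧
      (∀ n ≤ N, |(k n : ℝ)| ≤ (b (n + 1) : ℝ) / (2 * (b n : ℝ))) ∧
      (∀ n ≤ N, |(∑ i ∈ Finset.range (n + 1), (k i : ℝ) * (b i : ℝ))| ≤ (b (n + 1) : ℝ) / 2) := by
  have hpos := pos_of_dvd_succ_of_ne_succ hne hdvd
  refine ⟨l.natAbs, bmodDigit b l, ?_, fun n _ => ?_, fun n _ => ?_⟩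
  · have hlarge := two_pow_mul_le_of_dvd_succ_of_ne_succ hne hdvd (l.natAbs + 1)
    rw [hb0, mul_one, pow_succ] at hlarge
    have := Nat.lt_two_pow_self (n := l.natAbs)
    rw [sum_bmodDigit_mul l hb0 hdvd, Int.bmod_eq_of_le_mul_two] <;> omega
  · have h := two_mul_abs_bmodDigit_mul_le l (hpos (n + 1)) (hdvd n)
    have hbn : (0 : ℝ) < b n := by exact_mod_cast hpos n
    rw [le_div_iff₀ (by positivity)]
    calc |(bmodDigit b l n : ℝ)| * (2 * b n) = ((2 * |bmodDigit b l n| * b n : ℤ) : ℝ) := by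
          push_cast; ring
      _ ≤ b (n + 1) := by exact_mod_cast h
  · have h := Int.two_mul_abs_bmod_le l (hpos (n + 1))
    have hsum : ∑ i ∈ range (n + 1), (bmodDigit b l i : ℝ) * b i =
        ((l.bmod (b (n + 1)) : ℤ) : ℝ) := by
      exact_mod_cast sum_bmodDigit_mul l hb0 hdvd (n + 1)
    rw [hsum, le_div_iff₀ two_pos, mul_comm]
    exact_mod_cast h
end
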